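/- Let κ₀ ∈ ℂ with κ₀ ≠ 0, put λ₀ = κ₀², let b₀, c₀ ∈ ℂ, define η₀(x₊, x₋) = x₊/(2λ₀) − 2λ₀x₋, and on the open set of points (x₊, x₋) ∈ ℝ² where c₀ + (b₀/(2κ₀))e^{η₀} ≠ 0 define r(x₊, x₋) = (c₀ − (b₀/(2κ₀))e^{η₀}) / (c₀ + (b₀/(2κ₀))e^{η₀}). Then at every such point, 4·(r·∂₊∂₋r − (∂₊r)·(∂₋r)) = 1 − r⁴, where ∂± denote ∂/∂x±. -/

import Mathlib

/-! With `A = b₀ / (2κ₀)` we have `r = g ∘ η₀` for `g z = (c₀ - A e^z) / (c₀ + A e^z)`, and `g`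
solves the Riccati equation `g' = (g² - 1) / 2`. As `η₀` is affine with `α = ∂₊η₀`, `β = ∂₋η₀` and
`αβ = -1`, the chain rule gives `∂₊r = α (r² - 1)/2` and `∂₋r = β (r² - 1)/2`, hence
`∂₊∂₋r = αβ r (r² - 1)/2`, and the identity becomes polynomial algebra in `r`. -/

open Matrix Complex

/-- Partial derivative with respect to the first light-cone coordinate `x₊`. -/
noncomputable def dplus (f : ℝ × ℝ → ℂ) (p : ℝ × ℝ) : ℂ :=
  deriv (fun x => f (x, p.2)) p.1

/-- Partial derivative with respect to the second light-cone coordinate `x₋`. -/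
noncomputable def dminus (f : ℝ × ℝ → ℂ) (p : ℝ × ℝ) : ℂ :=
  deriv (fun y => f (p.1, y)) p.2

/-- The linear function `η₀(x₊, x₋) = x₊/(2λ₀) − 2λ₀x₋`. -/
noncomputable def eta (lam : ℂ) (p : ℝ × ℝ) : ℂ :=
  (p.1 : ℂ) / (2 * lam) - 2 * lam * (p.2 : ℂ)

/-- The function `r = e^{iu}`, where `u` is the bosonic body of the one-soliton
solution `s₂[1]` of the SUSY sine-Gordon equation. -/
noncomputable def rOneSoliton (κ lam b c : ℂ) (p : ℝ × ℝ) : ℂ :=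
  (c - (b / (2 * κ)) * exp (eta lam p)) / (c + (b / (2 * κ)) * exp (eta lam p))


open Filter Topology

noncomputable def kinkProfile (A c z : ℂ) : ℂ :=
  (c - A * exp z) / (c + A * exp z)

theorem hasDerivAt_kinkProfile {A c z : ℂ} (h : c + A * exp z ≠ 0) :
    HasDerivAt (kinkProfile A c) ((kinkProfile A c z ^ 2 - 1) / 2) z := by
  have hexp := (hasDerivAt_exp z).const_mul A
  refine ((hexp.const_sub c).div (hexp.const_add c) h).congr_deriv ?_
  rw [kinkProfile]
  field_simp
  ring

theorem hasDerivAt_eta_fst (lam : ℂ) (p : ℝ × ℝ) :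
    HasDerivAt (fun x : ℝ => eta lam (x, p.2)) (1 / (2 * lam)) p.1 := by
  simpa [_root_.eta] using ((hasDerivAt_id p.1).ofReal_comp.div_const (2 * lam)).sub_const
    (2 * lam * (p.2 : ℂ))

theorem hasDerivAt_eta_snd (lam : ℂ) (p : ℝ × ℝ) :
    HasDerivAt (fun y : ℝ => eta lam (p.1, y)) (-(2 * lam)) p.2 := by
  simpa [_root_.eta] using (((hasDerivAt_id p.2).ofReal_comp.const_mul (2 * lam)).const_sub
    ((p.1 : ℂ) / (2 * lam)))

section Riccati

variable {u : ℝ × ℝ → ℂ} {p : ℝ × ℝ} {α β : ℂ}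

theorem dplus_dminus_eq_of_riccati
    (hplus : HasDerivAt (fun x => u (x, p.2)) ((u p ^ 2 - 1) / 2 * α) p.1)
    (hminus : ∀ᶠ q in 𝓝 p, HasDerivAt (fun y => u (q.1, y)) ((u q ^ 2 - 1) / 2 * β) q.2) :
    dplus (dminus u) p = u p * ((u p ^ 2 - 1) / 2) * α * β := by
  have hline : Tendsto (fun x : ℝ => (x, p.2)) (𝓝 p.1) (𝓝 p) :=
    (continuous_id.prodMk continuous_const).tendsto p.1
  have hdminus : (fun x => dminus u (x, p.2)) =ᶠ[𝓝 p.1]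
      fun x => (u (x, p.2) ^ 2 - 1) / 2 * β :=
    (hline.eventually hminus).mono fun x hx => hx.deriv
  have hderiv := (((hplus.fun_pow 2).sub_const 1).div_const 2).mul_const β
  rw [dplus, hdminus.deriv_eq, hderiv.deriv]
  ring

theorem sineGordon_of_riccati (hαβ : α * β = -1)
    (hplus : HasDerivAt (fun x => u (x, p.2)) ((u p ^ 2 - 1) / 2 * α) p.1)
    (hminus : ∀ᶠ q in 𝓝 p, HasDerivAt (fun y => u (q.1, y)) ((u q ^ 2 - 1) / 2 * β) q.2) :
    4 * (u p * dplus (dminus u) p - dplus u p * dminus u p) = 1 - u p ^ 4 := by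
  rw [dplus_dminus_eq_of_riccati hplus hminus, dplus, dminus, hplus.deriv,
    hminus.self_of_nhds.deriv]
  linear_combination (u p ^ 4 - 1) * hαβ

end Riccati

/-- on the set where the denominator of `r` is nonzero,
`4(r·∂₊∂₋r − ∂₊r·∂₋r) = 1 − r⁴`, i.e. `u = −i log r` solves
`∂₊∂₋u = −(1/2)sin(2u)`. -/
theorem oneSoliton_solves_sineGordon (κ₀ lam₀ b₀ c₀ : ℂ) (hκ : κ₀ ≠ 0)
    (hlam : lam₀ = κ₀ ^ 2) (p : ℝ × ℝ)
    (hden : c₀ + (b₀ / (2 * κ₀)) * exp (eta lam₀ p) ≠ 0) :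
    4 * (rOneSoliton κ₀ lam₀ b₀ c₀ p *
          dplus (fun q => dminus (rOneSoliton κ₀ lam₀ b₀ c₀) q) p -
        dplus (rOneSoliton κ₀ lam₀ b₀ c₀) p * dminus (rOneSoliton κ₀ lam₀ b₀ c₀) p) =
      1 - (rOneSoliton κ₀ lam₀ b₀ c₀ p) ^ 4 := by
  have hlam₀ : lam₀ ≠ 0 := hlam ▸ pow_ne_zero 2 hκ
  have hden_near : ∀ᶠ q in 𝓝 p, c₀ + (b₀ / (2 * κ₀)) * exp (eta lam₀ q) ≠ 0 := by
    have hcont : Continuous (fun q => c₀ + (b₀ / (2 * κ₀)) * exp (eta lam₀ q)) := by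
      unfold _root_.eta
      fun_prop
    exact hcont.continuousAt.eventually_ne hden
  refine sineGordon_of_riccati (α := 1 / (2 * lam₀)) (β := -(2 * lam₀)) (by field_simp) ?_ ?_
  · exact (hasDerivAt_kinkProfile hden).comp p.1 (hasDerivAt_eta_fst lam₀ p)
  · filter_upwards [hden_near] with q hq
    exact (hasDerivAt_kinkProfile hq).comp q.2 (hasDerivAt_eta_snd lam₀ q)
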